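/- Fix c ≥ 1, t > 0, x ∈ ℝ³, and for 0 ≤ θ ≤ 1 consider the map p ↦ x − t·v_c^θ(p) from ℝ³ to ℝ³, where v_c^θ(p) = θ·p/γ_c(p) + (1−θ)·p. This map is injective, and the absolute value of the Jacobian determinant of its inverse is bounded by γ_c(p)⁵/t³ at the corresponding point. -/

import Mathlib

/-!
The velocity field `v_c^θ` is radial, `v_c^θ(p) = φ(|p|) p/|p|` with the strictly increasing
profile `φ(r) = θ r/√(1 + r²/c²) + (1 − θ) r`, so `|v_c^θ(p)|` determines `|p|`, hence
`γ_c(p)`, hence `p`. The Jacobian `∇v_c^θ(p)` acts as `θ/γ + 1 − θ` on `p^⊥` and, since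
`|p|²/c² = γ² − 1`, as `θ/γ³ + 1 − θ` along `p`; each of these convex combinations of `γ^{-k}` and
`1` is at least `γ^{-k}`, so `det ∇v_c^θ(p) ≥ γ^{-5}`.
-/

noncomputable section

/-- The relativistic Lorentz factor `γ_c(p) = √(1 + |p|²/c²)`. -/
def gam (c : ℝ) (p : EuclideanSpace ℝ (Fin 3)) : ℝ := Real.sqrt (1 + ‖p‖ ^ 2 / c ^ 2)

/-- The interpolated velocity `v_c^θ(p) = θ p/γ_c(p) + (1−θ) p`. -/
def velθ (θ c : ℝ) (p : EuclideanSpace ℝ (Fin 3)) : EuclideanSpace ℝ (Fin 3) :=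
  (θ / gam c p + (1 - θ)) • p

/-- The Jacobian of the interpolated velocity
`∇v_c^θ(p) = (θ/γ_c(p) + 1−θ) I₃ − (θ/γ_c(p)³) (p_i p_j / c²)_{i,j}`. -/
def Dv (θ c : ℝ) (p : EuclideanSpace ℝ (Fin 3)) : Matrix (Fin 3) (Fin 3) ℝ :=
  (θ / gam c p + (1 - θ)) • (1 : Matrix (Fin 3) (Fin 3) ℝ) -
    (θ / (gam c p) ^ 3) • Matrix.of fun i j => p i * p j / c ^ 2

lemma one_le_gam (c : ℝ) (p : EuclideanSpace ℝ (Fin 3)) : 1 ≤ gam c p :=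
  Real.one_le_sqrt.mpr (le_add_of_nonneg_right (by positivity))

lemma gam_sq (c : ℝ) (p : EuclideanSpace ℝ (Fin 3)) : gam c p ^ 2 = 1 + ‖p‖ ^ 2 / c ^ 2 :=
  Real.sq_sqrt (by positivity)

lemma inv_le_div_add_one_sub {θ g : ℝ} (hθ1 : θ ≤ 1) (hg : 1 ≤ g) :
    g⁻¹ ≤ θ / g + (1 - θ) := by
  have : 0 ≤ (1 - θ) * (1 - g⁻¹) :=
    mul_nonneg (by linarith) (by linarith [inv_le_one_of_one_le₀ hg])
  linarith [show θ / g + (1 - θ) - g⁻¹ = (1 - θ) * (1 - g⁻¹) by ring]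

lemma div_gam_add_one_sub_pos {θ : ℝ} (c : ℝ) (hθ1 : θ ≤ 1) (p : EuclideanSpace ℝ (Fin 3)) :
    0 < θ / gam c p + (1 - θ) :=
  (inv_pos.mpr (zero_lt_one.trans_le (one_le_gam c p))).trans_le
    (inv_le_div_add_one_sub hθ1 (one_le_gam c p))

lemma strictMonoOn_div_sqrt_one_add_sq_div {a : ℝ} (ha : 0 ≤ a) :
    StrictMonoOn (fun r : ℝ => r / √(1 + r ^ 2 / a)) (Set.Ici 0) := by
  intro r (hr : 0 ≤ r) s (hs : 0 ≤ s) hrs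
  have key : r ^ 2 * (1 + s ^ 2 / a) < s ^ 2 * (1 + r ^ 2 / a) := by
    have : r ^ 2 < s ^ 2 := by gcongr
    linarith [show r ^ 2 * (s ^ 2 / a) = s ^ 2 * (r ^ 2 / a) by ring]
  have hsq : r * √(1 + s ^ 2 / a) < s * √(1 + r ^ 2 / a) := by
    have := Real.sqrt_lt_sqrt (by positivity) key
    rwa [Real.sqrt_mul (by positivity), Real.sqrt_mul (by positivity), Real.sqrt_sq hr,
      Real.sqrt_sq hs] at this
  simp only
  rw [div_lt_div_iff₀ (by positivity) (by positivity)]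
  linarith

lemma norm_velθ (θ c : ℝ) (hθ1 : θ ≤ 1) (p : EuclideanSpace ℝ (Fin 3)) :
    ‖velθ θ c p‖ = θ * (‖p‖ / √(1 + ‖p‖ ^ 2 / c ^ 2)) + (1 - θ) * ‖p‖ := by
  rw [velθ, norm_smul, Real.norm_of_nonneg (div_gam_add_one_sub_pos c hθ1 p).le, gam]
  ring

lemma velθ_injective (θ c : ℝ) (hθ0 : 0 ≤ θ) (hθ1 : θ ≤ 1) :
    Function.Injective (velθ θ c) := by
  intro p q hpq
  have hmono : StrictMonoOn (fun r : ℝ => θ * (r / √(1 + r ^ 2 / c ^ 2)) + (1 - θ) * r)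
      (Set.Ici 0) := by
    intro r hr s hs hrs
    have h := strictMonoOn_div_sqrt_one_add_sq_div (sq_nonneg c) hr hs hrs
    rcases hθ1.lt_or_eq with hθ | rfl
    · simp only at h ⊢
      linarith [mul_le_mul_of_nonneg_left h.le hθ0, mul_lt_mul_of_pos_left hrs (sub_pos.mpr hθ)]
    · simpa using h
  have hnorm : ‖p‖ = ‖q‖ := hmono.injOn (norm_nonneg p) (norm_nonneg q) <| by
    simpa only [norm_velθ θ c hθ1] using congrArg norm hpq
  have hgam : gam c p = gam c q := by rw [gam, gam, hnorm]
  rw [velθ, velθ, ← hgam] at hpq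
  exact smul_right_injective _ (div_gam_add_one_sub_pos c hθ1 p).ne' hpq

lemma det_Dv (θ c : ℝ) (p : EuclideanSpace ℝ (Fin 3)) :
    (Dv θ c p).det = (θ / gam c p + (1 - θ)) ^ 2 * (θ / gam c p ^ 3 + (1 - θ)) := by
  set u := (gam c p)⁻¹ with hu
  set k := (c ^ 2)⁻¹ with hk
  have hnorm : (p 0 ^ 2 + p 1 ^ 2 + p 2 ^ 2) * k * u ^ 2 = 1 - u ^ 2 := by
    have hgu : gam c p * u = 1 := mul_inv_cancel₀ (by linarith [one_le_gam c p])
    have h := gam_sq c p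
    rw [EuclideanSpace.norm_sq_eq, Fin.sum_univ_three, div_eq_mul_inv] at h
    simp only [Real.norm_eq_abs, sq_abs] at h
    linear_combination -u ^ 2 * h + (1 + gam c p * u) * hgu
  simp only [Dv, Matrix.det_fin_three, Matrix.sub_apply, Matrix.smul_apply, Matrix.one_apply,
    Matrix.of_apply, smul_eq_mul]
  norm_num [Fin.ext_iff]
  simp only [div_eq_mul_inv, ← inv_pow, ← hu, ← hk]
  linear_combination (-(θ * u + (1 - θ)) ^ 2 * θ * u) * hnorm

lemma inv_pow_five_le_det_Dv (θ c : ℝ) (hθ1 : θ ≤ 1)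
    (p : EuclideanSpace ℝ (Fin 3)) : (gam c p ^ 5)⁻¹ ≤ (Dv θ c p).det := by
  have hg := one_le_gam c p
  have h1 := inv_le_div_add_one_sub hθ1 hg
  have h3 := inv_le_div_add_one_sub hθ1 (one_le_pow₀ hg : 1 ≤ gam c p ^ 3)
  calc (gam c p ^ 5)⁻¹ = (gam c p)⁻¹ ^ 2 * (gam c p ^ 3)⁻¹ := by ring
    _ ≤ _ := by rw [det_Dv]; gcongr

theorem stmt15_general (θ c t : ℝ) (hθ0 : 0 ≤ θ) (hθ1 : θ ≤ 1) (ht : 0 < t)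
    (x : EuclideanSpace ℝ (Fin 3)) :
    Function.Injective (fun p : EuclideanSpace ℝ (Fin 3) => x - t • velθ θ c p) ∧
      ∀ p : EuclideanSpace ℝ (Fin 3),
        |((-t : ℝ) ^ 3 * (Dv θ c p).det)|⁻¹ ≤ (gam c p) ^ 5 / t ^ 3 := by
  refine ⟨(sub_right_injective.comp (smul_right_injective _ ht.ne')).comp
    (velθ_injective θ c hθ0 hθ1), fun p => ?_⟩
  have hdet := inv_pow_five_le_det_Dv θ c hθ1 p
  have hg : 0 < gam c p := by linarith [one_le_gam c p]
  have hdet_pos : 0 < (Dv θ c p).det := (inv_pos.mpr (pow_pos hg 5)).trans_le hdet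
  rw [abs_mul, abs_pow, abs_neg, abs_of_pos ht, abs_of_pos hdet_pos, ← inv_div]
  gcongr
  calc t ^ 3 / gam c p ^ 5 = t ^ 3 * (gam c p ^ 5)⁻¹ := div_eq_mul_inv _ _
    _ ≤ t ^ 3 * (Dv θ c p).det := by gcongr

/-- For `t > 0`, the map `p ↦ x − t v_c^θ(p)` is injective and the absolute value of
the Jacobian determinant of its inverse (namely `1/|det(−t ∇v_c^θ(p))|`) is bounded by
`γ_c(p)⁵ / t³`. -/
theorem stmt15 (θ c t : ℝ) (hθ0 : 0 ≤ θ) (hθ1 : θ ≤ 1) (hc : 1 ≤ c) (ht : 0 < t)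
    (x : EuclideanSpace ℝ (Fin 3)) :
    Function.Injective (fun p : EuclideanSpace ℝ (Fin 3) => x - t • velθ θ c p) ∧
      ∀ p : EuclideanSpace ℝ (Fin 3),
        |((-t : ℝ) ^ 3 * (Dv θ c p).det)|⁻¹ ≤ (gam c p) ^ 5 / t ^ 3 :=
  stmt15_general θ c t hθ0 hθ1 ht x
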